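/- Let T be a balanced tree with k levels (k ≥ 2) and L its graph Laplacian. If f is a function on the vertices with Lf = λf and f(v) ≠ 0 for every vertex v, then λ is a simple eigenvalue of L and f is stratified. -/

import Mathlib

open scoped Classical

/-- Vertices of the balanced tree with `k` levels and branching sequence `c`:
a vertex at level `l` (`0 ≤ l ≤ k-1`) is a function assigning to each `i < l` a
label in `Fin (c i)` (the label of the level-`(i+1)` ancestor among its siblings). -/
abbrev BTVert (k : ℕ) (c : ℕ → ℕ) : Type := Σ l : Fin k, ∀ i : Fin l.val, Fin (c i.val)

/-- `p` is the parent of `v` in the balanced tree. -/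
def IsParentOf {k : ℕ} {c : ℕ → ℕ} (p v : BTVert k c) : Prop :=
  ∃ h : p.1.val + 1 = v.1.val,
    ∀ i : Fin p.1.val, v.2 ⟨i.val, by have := i.isLt; omega⟩ = p.2 i

/-- The balanced tree as a simple graph: each non-root vertex is adjacent to its parent. -/
def btGraph (k : ℕ) (c : ℕ → ℕ) : SimpleGraph (BTVert k c) where
  Adj u v := IsParentOf u v ∨ IsParentOf v u
  symm := ⟨fun u v h => h.symm⟩
  loopless := ⟨fun v h => by
    rcases h with ⟨h, -⟩ | ⟨h, -⟩ <;> omega⟩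

/-- The root (the unique vertex at level 0). -/
def btRoot (k : ℕ) (c : ℕ → ℕ) (hk : 0 < k) : BTVert k c :=
  ⟨⟨0, hk⟩, fun i => i.elim0⟩

/-- `u` belongs to the maximal subtree rooted at `v` (`u` is `v` or a descendant of `v`). -/
def InSubtree {k : ℕ} {c : ℕ → ℕ} (v u : BTVert k c) : Prop :=
  ∃ h : v.1.val ≤ u.1.val,
    ∀ i : Fin v.1.val, u.2 ⟨i.val, by have := i.isLt; omega⟩ = v.2 i

/-- A function on the vertices is stratified if it only depends on the level. -/
def Stratified {k : ℕ} {c : ℕ → ℕ} (f : BTVert k c → ℝ) : Prop :=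
  ∀ u v : BTVert k c, u.1 = v.1 → f u = f v

/-- Number of vertices at level `l`: `n(l) = c(0) ⋯ c(l-1)`. -/
def nlev (c : ℕ → ℕ) (l : ℕ) : ℕ := ∏ i ∈ Finset.range l, c i

/-- The common degree `d(l)` of the vertices at level `l`. -/
def branchDeg (k : ℕ) (c : ℕ → ℕ) (l : ℕ) : ℕ :=
  if l = 0 then c 0 else if l = k - 1 then 1 else c l + 1

/-- The symmetric tridiagonal matrix `T^{(l0)}` with diagonal `d(l0), …, d(k-1)` and
off-diagonal `√c(l0), …, √c(k-2)`. -/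
noncomputable def matT (k : ℕ) (c : ℕ → ℕ) (l0 : ℕ) :
    Matrix (Fin (k - l0)) (Fin (k - l0)) ℝ := fun i j =>
  if i = j then (branchDeg k c (l0 + i.val) : ℝ)
  else if i.val + 1 = j.val then Real.sqrt (c (l0 + i.val))
  else if j.val + 1 = i.val then Real.sqrt (c (l0 + j.val))
  else 0

/-- The tridiagonal matrix `S^{(l0)}` with diagonal `d(l0), …, d(k-1)`, subdiagonal
entries `-1` and superdiagonal entries `-c(l0), …, -c(k-2)`. -/
def matS (k : ℕ) (c : ℕ → ℕ) (l0 : ℕ) :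
    Matrix (Fin (k - l0)) (Fin (k - l0)) ℝ := fun i j =>
  if i = j then (branchDeg k c (l0 + i.val) : ℝ)
  else if i.val + 1 = j.val then -(c (l0 + i.val) : ℝ)
  else if j.val + 1 = i.val then -1
  else 0

/-- `lam` is an eigenvalue of the matrix `A`. -/
def IsEigenvalue {V : Type*} [Fintype V] (A : Matrix V V ℝ) (lam : ℝ) : Prop :=
  ∃ f : V → ℝ, f ≠ 0 ∧ A.mulVec f = lam • f

/-- The (geometric) multiplicity of `lam` as an eigenvalue of `A`. -/
noncomputable def eigMult {V : Type*} [Fintype V] (A : Matrix V V ℝ) (lam : ℝ) : ℕ :=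
  Module.finrank ℝ
    ↥(LinearMap.ker (A.mulVecLin - lam • (LinearMap.id : (V → ℝ) →ₗ[ℝ] (V → ℝ))))

/-- The Dirichlet Laplacian on a subset `Ω` of the vertices of the balanced tree:
the principal submatrix of the Laplacian with rows and columns indexed by `Ω`. -/
noncomputable def dirichletLap (k : ℕ) (c : ℕ → ℕ) (Ω : Set (BTVert k c)) :
    Matrix Ω Ω ℝ := fun u v => (btGraph k c).lapMatrix ℝ u.1 v.1

/-!
The argument is a Wronskian identity along parent edges. If `f` and `g` are eigenfunctions
for the same `λ` and `u`, `v` lie on a common level `l ≥ 1`, then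
`g u * f (parent v) = f v * g (parent u)`: at the leaves both sides are `(1 - λ) g u f v`, and
the eigenvalue equation at `u` and `v` reduces the identity at level `l` to the identities
between corresponding children at level `l + 1`. If `f` vanishes nowhere, dividing by `f` and
climbing to the root gives `g u * f root = f v * g root` on every level. Taking `g = f` shows
that `f` is stratified, and taking `u = v` that every eigenfunction for `λ` is a multiple of `f`.
-/

open Matrix

namespace BTVert

variable {k : ℕ} {c : ℕ → ℕ}

/-- The parent of a vertex; the root is its own parent. -/
def parent (v : BTVert k c) : BTVert k c :=
  ⟨⟨v.1.val - 1, by omega⟩,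
    fun i => v.2 ⟨i.val, by have : i.val < v.1.val - 1 := i.isLt; omega⟩⟩

def child (v : BTVert k c) (h : v.1.val + 1 < k) (a : Fin (c v.1.val)) : BTVert k c :=
  ⟨⟨v.1.val + 1, h⟩, fun i =>
    if hi : i.val < v.1.val then v.2 ⟨i.val, hi⟩
    else Fin.cast (congrArg c (by have : i.val < v.1.val + 1 := i.isLt; omega)) a⟩

theorem ext_of_level_eq {v w : BTVert k c} (h : v.1.val = w.1.val)
    (hlab : ∀ (i : ℕ) (hv : i < v.1.val) (hw : i < w.1.val), v.2 ⟨i, hv⟩ = w.2 ⟨i, hw⟩) :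
    v = w := by
  obtain ⟨⟨l, hl⟩, a⟩ := v
  obtain ⟨⟨l', hl'⟩, b⟩ := w
  obtain rfl : l = l' := h
  obtain rfl : a = b := funext fun i => hlab i.val i.isLt i.isLt
  rfl

theorem eq_root_of_level_eq_zero (hk : 0 < k) {v : BTVert k c} (hv : v.1.val = 0) :
    v = btRoot k c hk :=
  ext_of_level_eq hv fun i _ hw => absurd hw (Nat.not_lt_zero i)

theorem level_parent (v : BTVert k c) : v.parent.1.val = v.1.val - 1 := rfl

theorem isParentOf_parent {v : BTVert k c} (h : 1 ≤ v.1.val) : IsParentOf v.parent v :=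
  ⟨by rw [level_parent]; omega, fun _ => rfl⟩

theorem eq_parent_of_isParentOf {p v : BTVert k c} (hp : IsParentOf p v) : p = v.parent := by
  obtain ⟨hlev, hlab⟩ := hp
  exact ext_of_level_eq (by rw [level_parent]; omega) fun i hv _ => (hlab ⟨i, hv⟩).symm

theorem isParentOf_child (v : BTVert k c) (h : v.1.val + 1 < k) (a : Fin (c v.1.val)) :
    IsParentOf v (v.child h a) :=
  ⟨rfl, fun i => dif_pos i.isLt⟩

theorem parent_child (v : BTVert k c) (h : v.1.val + 1 < k) (a : Fin (c v.1.val)) :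
    (v.child h a).parent = v :=
  (eq_parent_of_isParentOf (isParentOf_child v h a)).symm

theorem exists_eq_child_of_isParentOf {v u : BTVert k c} (hp : IsParentOf v u) :
    ∃ (h : v.1.val + 1 < k) (a : Fin (c v.1.val)), u = v.child h a := by
  obtain ⟨hlev, hlab⟩ := hp
  refine ⟨hlev ▸ u.1.isLt, u.2 ⟨v.1.val, by omega⟩, ?_⟩
  refine ext_of_level_eq hlev.symm fun i _ hi' => ?_
  change i < v.1.val + 1 at hi'
  show _ = dite _ _ _
  split_ifs with hi
  · exact hlab ⟨i, hi⟩
  · change ¬i < v.1.val at hi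
    obtain rfl : i = v.1.val := by omega
    rfl

theorem child_injective (v : BTVert k c) (h : v.1.val + 1 < k) :
    Function.Injective (v.child h) := by
  intro a b hab
  have hlab := congrArg (fun w : BTVert k c => if hw : v.1.val < w.1.val
    then (w.2 ⟨v.1.val, hw⟩).val else 0) hab
  simpa [child, Fin.val_inj] using hlab

theorem parent_notMem_image_child (v : BTVert k c) (h : v.1.val + 1 < k) :
    v.parent ∉ Finset.univ.image (v.child h) := by
  simp only [Finset.mem_image, Finset.mem_univ, true_and, not_exists]
  intro a ha
  have hlev := congrArg (fun w : BTVert k c => w.1.val) ha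
  simp only [child, level_parent] at hlev
  omega

end BTVert

open BTVert

section Laplacian

variable {k : ℕ} {c : ℕ → ℕ}

theorem btGraph_neighborFinset_of_leaf {v : BTVert k c} (h1 : 1 ≤ v.1.val)
    (h2 : v.1.val + 1 = k) :
    (btGraph k c).neighborFinset v = {v.parent} := by
  ext u
  simp only [SimpleGraph.mem_neighborFinset, Finset.mem_singleton]
  refine ⟨?_, fun hu => hu ▸ Or.inr (isParentOf_parent h1)⟩
  rintro (hp | hp)
  · obtain ⟨hlt, -, -⟩ := exists_eq_child_of_isParentOf hp
    omega
  · exact eq_parent_of_isParentOf hp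

theorem btGraph_neighborFinset_of_internal {v : BTVert k c} (h1 : 1 ≤ v.1.val)
    (h2 : v.1.val + 1 < k) :
    (btGraph k c).neighborFinset v = insert v.parent (Finset.univ.image (v.child h2)) := by
  ext u
  simp only [SimpleGraph.mem_neighborFinset, Finset.mem_insert, Finset.mem_image,
    Finset.mem_univ, true_and]
  constructor
  · rintro (hp | hp)
    · obtain ⟨-, a, rfl⟩ := exists_eq_child_of_isParentOf hp
      exact Or.inr ⟨a, rfl⟩
    · exact Or.inl (eq_parent_of_isParentOf hp)
  · rintro (rfl | ⟨a, rfl⟩)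
    · exact Or.inr (isParentOf_parent h1)
    · exact Or.inl (isParentOf_child v h2 a)

theorem btGraph_lapMatrix_mulVec_of_leaf (g : BTVert k c → ℝ) {v : BTVert k c}
    (h1 : 1 ≤ v.1.val) (h2 : v.1.val + 1 = k) :
    ((btGraph k c).lapMatrix ℝ *ᵥ g) v = g v - g v.parent := by
  rw [SimpleGraph.lapMatrix_mulVec_apply, ← SimpleGraph.card_neighborFinset_eq_degree,
    btGraph_neighborFinset_of_leaf h1 h2]
  simp

theorem btGraph_lapMatrix_mulVec_of_internal (g : BTVert k c → ℝ) {v : BTVert k c}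
    (h1 : 1 ≤ v.1.val) (h2 : v.1.val + 1 < k) :
    ((btGraph k c).lapMatrix ℝ *ᵥ g) v =
      ((c v.1.val : ℝ) + 1) * g v - g v.parent - ∑ a, g (v.child h2 a) := by
  have hnotMem := parent_notMem_image_child v h2
  rw [SimpleGraph.lapMatrix_mulVec_apply, ← SimpleGraph.card_neighborFinset_eq_degree,
    btGraph_neighborFinset_of_internal h1 h2, Finset.card_insert_of_notMem hnotMem,
    Finset.sum_insert hnotMem, Finset.card_image_of_injective _ (child_injective v h2),
    Finset.sum_image fun a _ b _ hab => child_injective v h2 hab]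
  simp only [Finset.card_univ, Fintype.card_fin]
  push_cast
  ring

theorem mul_apply_parent_eq_of_eigen {lam : ℝ} {f g : BTVert k c → ℝ}
    (hf : (btGraph k c).lapMatrix ℝ *ᵥ f = lam • f)
    (hg : (btGraph k c).lapMatrix ℝ *ᵥ g = lam • g)
    {u v : BTVert k c} (huv : u.1 = v.1) (hu : 1 ≤ u.1.val) :
    g u * f v.parent = f v * g u.parent := by
  obtain ⟨d, hd⟩ : ∃ d, u.1.val + 1 + d = k := ⟨k - (u.1.val + 1), by omega⟩
  induction d generalizing u v with
  | zero =>
    have hv : 1 ≤ v.1.val := huv ▸ hu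
    have hfv := congrFun hf v
    have hgu := congrFun hg u
    rw [btGraph_lapMatrix_mulVec_of_leaf f hv (by rw [← huv]; omega)] at hfv
    rw [btGraph_lapMatrix_mulVec_of_leaf g hu (by omega)] at hgu
    simp only [Pi.smul_apply, smul_eq_mul] at hfv hgu
    linear_combination -g u * hfv + f v * hgu
  | succ d ih =>
    obtain ⟨l, a⟩ := u
    obtain ⟨l', b⟩ := v
    obtain rfl : l = l' := huv
    change l.val + 1 + (d + 1) = k at hd
    have h2 : l.val + 1 < k := by omega
    have hchildren (x) :
        g (child ⟨l, a⟩ h2 x) * f ⟨l, b⟩ = f (child ⟨l, b⟩ h2 x) * g ⟨l, a⟩ := by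
      simpa only [parent_child] using ih (u := child ⟨l, a⟩ h2 x) (v := child ⟨l, b⟩ h2 x) rfl
        (by simp [child]) (by simp [child]; omega)
    have hfv := congrFun hf ⟨l, b⟩
    have hgu := congrFun hg ⟨l, a⟩
    rw [btGraph_lapMatrix_mulVec_of_internal f (v := ⟨l, b⟩) hu h2] at hfv
    rw [btGraph_lapMatrix_mulVec_of_internal g hu h2] at hgu
    simp only [Pi.smul_apply, smul_eq_mul] at hfv hgu
    have hsum :
        g ⟨l, a⟩ * ∑ x, f (child ⟨l, b⟩ h2 x) = f ⟨l, b⟩ * ∑ x, g (child ⟨l, a⟩ h2 x) := by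
      simp only [Finset.mul_sum]
      exact Finset.sum_congr rfl fun x _ => by linear_combination -hchildren x
    linear_combination -g ⟨l, a⟩ * hfv + f ⟨l, b⟩ * hgu - hsum

theorem mul_apply_root_eq_of_eigen (hk : 0 < k) {lam : ℝ} {f g : BTVert k c → ℝ}
    (hf : (btGraph k c).lapMatrix ℝ *ᵥ f = lam • f) (hfz : ∀ v, f v ≠ 0)
    (hg : (btGraph k c).lapMatrix ℝ *ᵥ g = lam • g)
    {u v : BTVert k c} (huv : u.1 = v.1) :
    g u * f (btRoot k c hk) = f v * g (btRoot k c hk) := by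
  obtain ⟨n, hn⟩ : ∃ n, u.1.val = n := ⟨_, rfl⟩
  induction n generalizing u v with
  | zero =>
    rw [eq_root_of_level_eq_zero hk (v := u) hn, eq_root_of_level_eq_zero hk (v := v) (huv ▸ hn),
      mul_comm]
  | succ n ih =>
    have hparent : u.parent.1 = v.parent.1 := Fin.ext (by simp only [level_parent, huv])
    have hcross := mul_apply_parent_eq_of_eigen hf hg huv (by omega)
    have hup := ih hparent (by rw [level_parent]; omega)
    refine mul_right_cancel₀ (hfz v.parent) ?_
    linear_combination f (btRoot k c hk) * hcross + f v * hup

end Laplacian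

theorem eigMult_eq_one {V : Type*} [Fintype V] {A : Matrix V V ℝ} {lam : ℝ} {f : V → ℝ}
    (hf0 : f ≠ 0) (hf : A *ᵥ f = lam • f) (hmul : ∀ g, A *ᵥ g = lam • g → ∃ t : ℝ, t • f = g) :
    eigMult A lam = 1 := by
  have hmem : ∀ g, g ∈ LinearMap.ker (A.mulVecLin - lam • LinearMap.id) ↔ A *ᵥ g = lam • g :=
    fun g => by simp [sub_eq_zero]
  have hker : LinearMap.ker (A.mulVecLin - lam • LinearMap.id) = Submodule.span ℝ {f} := by
    ext g
    rw [hmem, Submodule.mem_span_singleton]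
    refine ⟨hmul g, ?_⟩
    rintro ⟨t, rfl⟩
    rw [Matrix.mulVec_smul, hf, smul_comm]
  rw [eigMult, hker, finrank_span_singleton hf0]

theorem nowhere_zero_eigenfunction_stratified_general (k : ℕ) (hk : 2 ≤ k) (c : ℕ → ℕ)
    (lam : ℝ) (f : BTVert k c → ℝ)
    (hf : ((btGraph k c).lapMatrix ℝ).mulVec f = lam • f)
    (hfz : ∀ v : BTVert k c, f v ≠ 0) :
    eigMult ((btGraph k c).lapMatrix ℝ) lam = 1 ∧ Stratified f := by
  have hk0 : 0 < k := by omega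
  constructor
  · refine eigMult_eq_one (fun h => hfz _ (congrFun h (btRoot k c hk0))) hf fun g hg => ?_
    refine ⟨g (btRoot k c hk0) / f (btRoot k c hk0), funext fun v => ?_⟩
    rw [Pi.smul_apply, smul_eq_mul, div_mul_eq_mul_div, div_eq_iff (hfz _)]
    linear_combination (mul_apply_root_eq_of_eigen hk0 hf hfz hg (rfl : v.1 = v.1)).symm
  · exact fun u v huv => mul_right_cancel₀ (hfz _) (mul_apply_root_eq_of_eigen hk0 hf hfz hf huv)

/-- a nowhere-vanishing Laplacian eigenfunction on a balanced tree belongs to a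
simple eigenvalue and is stratified. -/
theorem nowhere_zero_eigenfunction_stratified (k : ℕ) (hk : 2 ≤ k) (c : ℕ → ℕ)
    (hc : ∀ l, l ≤ k - 2 → 1 ≤ c l) (lam : ℝ) (f : BTVert k c → ℝ)
    (hf : ((btGraph k c).lapMatrix ℝ).mulVec f = lam • f)
    (hfz : ∀ v : BTVert k c, f v ≠ 0) :
    eigMult ((btGraph k c).lapMatrix ℝ) lam = 1 ∧ Stratified f :=
  nowhere_zero_eigenfunction_stratified_general k hk c lam f hf hfz
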